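/- arXiv:2104.14732 — 3 statements merged into one kernel-verified Lean document; each statement's English description precedes it below -/
import Mathlib

section
/- Let k be a finite field of odd characteristic and let x ∈ PGL_2(k) be an element with x ≠ 1 and x² = 1. Then the following are equivalent: (i) there exists G ∈ GL_2(k) with G² = I and Proj(G) = x; (ii) for some (equivalently, for every) g ∈ GL_2(k) with Proj(g) = x, the element −det(g) is a square in k×. -/
open Matrix

/-- The homomorphism `λ ↦ λ·I` from units of `R` to `GL 2 R`. -/
def scalarHom (R : Type*) [CommRing R] : Rˣ →* GL (Fin 2) R :=
  Units.map (Matrix.scalar (Fin 2) : R →+* Matrix (Fin 2) (Fin 2) R).toMonoidHom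

/-- The central subgroup of scalar matrices `λ·I`, `λ` a unit. -/
def scalarSubgroup (R : Type*) [CommRing R] : Subgroup (GL (Fin 2) R) :=
  (scalarHom R).range

theorem scalarSubgroup_le_center (R : Type*) [CommRing R] :
    scalarSubgroup R ≤ Subgroup.center (GL (Fin 2) R) := by
  rintro _ ⟨u, rfl⟩
  rw [Subgroup.mem_center_iff]
  intro g
  refine Units.ext ?_
  have h := (Matrix.scalar_commute (u : R) (fun r' => mul_comm _ _)
    (g : Matrix (Fin 2) (Fin 2) R)).symm.eq
  simpa [scalarHom] using h

instance scalarSubgroup_normal (R : Type*) [CommRing R] : (scalarSubgroup R).Normal := by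
  constructor
  intro n hn g
  have h := (Subgroup.mem_center_iff.mp (scalarSubgroup_le_center R hn)) g
  rw [h, mul_assoc, mul_inv_cancel, mul_one]
  exact hn

/-- `PGL₂(R)`: the quotient of `GL₂(R)` by the subgroup of scalar matrices. -/
def PGL2 (R : Type*) [CommRing R] : Type _ :=
  GL (Fin 2) R ⧸ scalarSubgroup R

instance (R : Type*) [CommRing R] : Group (PGL2 R) :=
  QuotientGroup.Quotient.group _

/-- The canonical projection `GL₂(R) → PGL₂(R)`. -/
def Proj (R : Type*) [CommRing R] : GL (Fin 2) R →* PGL2 R :=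
  QuotientGroup.mk' (scalarSubgroup R)

/-- The homomorphism `PGL₂(R) → PGL₂(S)` induced by a ring homomorphism `R → S`. -/
def PGLmap {R S : Type*} [CommRing R] [CommRing S] (f : R →+* S) :
    PGL2 R →* PGL2 S := by
  refine QuotientGroup.lift (scalarSubgroup R)
    ((Proj S).comp (Matrix.GeneralLinearGroup.map f)) ?_
  rintro _ ⟨u, rfl⟩
  rw [MonoidHom.mem_ker, MonoidHom.comp_apply]
  have : (Matrix.GeneralLinearGroup.map f) (scalarHom R u) = scalarHom S (Units.map f.toMonoidHom u) := by
    refine Units.ext ?_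
    ext i j
    simp [scalarHom, Matrix.GeneralLinearGroup.map, Matrix.scalar_apply, Matrix.diagonal_apply]
    split <;> simp
  rw [this]
  exact (QuotientGroup.eq_one_iff _).mpr ⟨_, rfl⟩

/-- Discrete topology on finite matrix groups. -/
instance (R : Type*) [CommRing R] : TopologicalSpace (PGL2 R) := ⊥
instance instTopGL (R : Type*) [CommRing R] : TopologicalSpace (GL (Fin 2) R) := ⊥

/-!
Let `g` be a lift of `x`. Since `x ≠ 1` but `x ^ 2 = 1`, the matrix `g` is not scalar while `g ^ 2`
is. By Cayley–Hamilton, `trace g • g = g ^ 2 + det g • 1` is then scalar, which forces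
`trace g = 0` and hence `g ^ 2 = -det g • 1`. Every other lift is `c • g` with `(c • g) ^ 2 =
-c ^ 2 det g • 1`, so some lift squares to `1` exactly when `-det g` is a square, and this does
not depend on the choice of `g`.
-/

theorem Matrix.sq_eq_trace_smul_sub_det_smul_one {R : Type*} [CommRing R]
    (M : Matrix (Fin 2) (Fin 2) R) : M ^ 2 = M.trace • M - M.det • 1 := by
  rw [sq]
  ext i j
  fin_cases i <;> fin_cases j <;>
    simp only [Fin.isValue, Fin.zero_eta, Fin.mk_one, Matrix.mul_apply, Fin.sum_univ_two,
      Matrix.trace_fin_two, Matrix.det_fin_two, Matrix.sub_apply, Matrix.smul_apply, smul_eq_mul,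
      Matrix.one_apply_eq, Matrix.one_apply_ne zero_ne_one, Matrix.one_apply_ne one_ne_zero] <;>
    ring

section CommRing

variable {R : Type*} [CommRing R]

@[simp]
theorem val_scalarHom (c : Rˣ) : ((scalarHom R c : GL (Fin 2) R) : Matrix (Fin 2) (Fin 2) R) =
    (c : R) • 1 := by
  rw [Matrix.smul_one_eq_diagonal]
  rfl

theorem scalarHom_injective : Function.Injective (scalarHom R) := by
  intro c d h
  ext
  simpa using congrArg (fun g : GL (Fin 2) R => (g : Matrix (Fin 2) (Fin 2) R) 0 0) h

theorem commute_scalarHom (c : Rˣ) (g : GL (Fin 2) R) : Commute (scalarHom R c) g :=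
  (Subgroup.mem_center_iff.mp (scalarSubgroup_le_center R ⟨c, rfl⟩) g).symm

theorem mem_scalarSubgroup_of_val_eq_smul_one {g : GL (Fin 2) R} {a : R}
    (h : (g : Matrix (Fin 2) (Fin 2) R) = a • 1) : g ∈ scalarSubgroup R := by
  have hdet : IsUnit (a * a) := by
    simpa [h, Matrix.det_fin_two] using (g.isUnit.map Matrix.detMonoidHom)
  have ha := isUnit_of_mul_isUnit_left hdet
  exact ⟨ha.unit, Units.ext (by simp [h])⟩

theorem proj_eq_one_iff {g : GL (Fin 2) R} : Proj R g = 1 ↔ g ∈ scalarSubgroup R :=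
  QuotientGroup.eq_one_iff g

theorem proj_eq_proj_iff {g h : GL (Fin 2) R} :
    Proj R g = Proj R h ↔ ∃ c : Rˣ, scalarHom R c * h = g := by
  rw [← div_eq_one, ← map_div, proj_eq_one_iff]
  exact exists_congr fun c => eq_div_iff_mul_eq'

theorem exists_sq_eq_one_proj_eq_iff {g : GL (Fin 2) R}
    (hg : g ^ 2 = scalarHom R (-Matrix.GeneralLinearGroup.det g)) :
    (∃ G : GL (Fin 2) R, G ^ 2 = 1 ∧ Proj R G = Proj R g) ↔
      IsSquare (-Matrix.GeneralLinearGroup.det g) := by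
  have sq_scalarHom_mul (c : Rˣ) :
      (scalarHom R c * g) ^ 2 = scalarHom R (c ^ 2 * -Matrix.GeneralLinearGroup.det g) := by
    rw [(commute_scalarHom c g).mul_pow, hg, map_mul, map_pow]
  constructor
  · rintro ⟨G, hG, hGg⟩
    obtain ⟨c, rfl⟩ := proj_eq_proj_iff.mp hGg
    rw [sq_scalarHom_mul, ← map_one (scalarHom R)] at hG
    refine ⟨c⁻¹, ?_⟩
    rw [eq_inv_mul_of_mul_eq (scalarHom_injective hG), mul_one, ← mul_inv, sq]
  · rintro ⟨r, hr⟩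
    refine ⟨scalarHom R r⁻¹ * g, ?_, by rw [map_mul, proj_eq_one_iff.mpr ⟨_, rfl⟩, one_mul]⟩
    rw [sq_scalarHom_mul, hr, ← sq, ← mul_pow, inv_mul_cancel, one_pow, map_one]

end CommRing

theorem sq_eq_scalarHom_neg_det {k : Type*} [Field k] {g : GL (Fin 2) k}
    (hg : g ∉ scalarSubgroup k) (hg2 : g ^ 2 ∈ scalarSubgroup k) :
    g ^ 2 = scalarHom k (-Matrix.GeneralLinearGroup.det g) := by
  obtain ⟨c, hc⟩ := hg2
  set M : Matrix (Fin 2) (Fin 2) k := (g : Matrix (Fin 2) (Fin 2) k)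
  have hM2 : M ^ 2 = (c : k) • 1 := by rw [← Units.val_pow_eq_pow_val, ← hc, val_scalarHom]
  have htrace : M.trace = 0 := by
    by_contra htr
    refine hg (mem_scalarSubgroup_of_val_eq_smul_one (a := M.trace⁻¹ * (c + M.det)) ?_)
    have hCH := M.sq_eq_trace_smul_sub_det_smul_one
    rw [hM2, eq_sub_iff_add_eq, ← add_smul] at hCH
    rw [mul_smul, hCH, inv_smul_smul₀ htr]
  apply Units.ext
  rw [Units.val_pow_eq_pow_val, M.sq_eq_trace_smul_sub_det_smul_one, htrace, zero_smul,
    zero_sub, val_scalarHom, Units.val_neg, Matrix.GeneralLinearGroup.val_det_apply, neg_smul]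

theorem involution_lifting_criterion_general (k : Type*) [Field k]
    (x : PGL2 k) (hx1 : x ≠ 1) (hx2 : x ^ 2 = 1) :
    ((∃ G : GL (Fin 2) k, G ^ 2 = 1 ∧ Proj k G = x) ↔
      ∃ g : GL (Fin 2) k, Proj k g = x ∧ IsSquare (-(Matrix.GeneralLinearGroup.det g))) ∧
    ((∃ G : GL (Fin 2) k, G ^ 2 = 1 ∧ Proj k G = x) ↔
      ∀ g : GL (Fin 2) k, Proj k g = x → IsSquare (-(Matrix.GeneralLinearGroup.det g))) := by
  have lift_iff (g : GL (Fin 2) k) (hg : Proj k g = x) :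
      (∃ G : GL (Fin 2) k, G ^ 2 = 1 ∧ Proj k G = x) ↔
        IsSquare (-Matrix.GeneralLinearGroup.det g) := by
    subst hg
    refine exists_sq_eq_one_proj_eq_iff (sq_eq_scalarHom_neg_det ?_ ?_)
    · exact fun h => hx1 (proj_eq_one_iff.mpr h)
    · exact proj_eq_one_iff.mp (by rw [map_pow, hx2])
  obtain ⟨g, hg⟩ := QuotientGroup.mk'_surjective (scalarSubgroup k) x
  exact ⟨⟨fun h => ⟨g, hg, (lift_iff g hg).mp h⟩, fun ⟨g', hg', hsq⟩ => (lift_iff g' hg').mpr hsq⟩,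
    ⟨fun h g' hg' => (lift_iff g' hg').mp h, fun hall => (lift_iff g hg).mpr (hall g hg)⟩⟩

/-- Criterion for a projective involution in `PGL₂(k)` (`k` a finite field of odd
characteristic) to lift to an involution in `GL₂(k)`: a lift of order dividing 2 exists
iff for some (equivalently, every) lift `g` of `x`, `-det g` is a square. -/
theorem involution_lifting_criterion (k : Type*) [Field k] [Finite k]
    (hchar : ringChar k ≠ 2) (x : PGL2 k) (hx1 : x ≠ 1) (hx2 : x ^ 2 = 1) :
    ((∃ G : GL (Fin 2) k, G ^ 2 = 1 ∧ Proj k G = x) ↔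
      ∃ g : GL (Fin 2) k, Proj k g = x ∧ IsSquare (-(Matrix.GeneralLinearGroup.det g))) ∧
    ((∃ G : GL (Fin 2) k, G ^ 2 = 1 ∧ Proj k G = x) ↔
      ∀ g : GL (Fin 2) k, Proj k g = x → IsSquare (-(Matrix.GeneralLinearGroup.det g))) :=
  involution_lifting_criterion_general k x hx1 hx2
end

section
/- Let R = Z[√−2] (the ring of integers of Q(√−2)) and let π : R → F_3 be the ring homomorphism with π(√−2) = 1. Then the induced group homomorphism PGL_2(R) → PGL_2(F_3) admits a section: there exists a group homomorphism s : PGL_2(F_3) → PGL_2(R) whose composite with the induced homomorphism is the identity on PGL_2(F_3). -/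
/-! Reduction along `π` maps a suitable finite subgroup of `GL₂(ℤ[√-2])` of order 48 isomorphically
onto `GL₂(𝔽₃)`, which is checked by evaluation on an explicit list of its elements. Inverting the
reduction on this subgroup gives a homomorphic section `GL₂(𝔽₃) → GL₂(ℤ[√-2])`. It sends `-1` to
`-1`, so it maps the scalars `±1` of `GL₂(𝔽₃)` to scalars and descends to `PGL₂`. -/

open Matrix

theorem Submonoid.exists_lift_of_injOn {M N G : Type*} [Monoid M] [Monoid N] [Monoid G]
    (f : M →* N) (S : Submonoid M) (φ : G →* N) (hinj : Set.InjOn f S)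
    (hsurj : ∀ g, ∃ x ∈ S, f x = φ g) : ∃ s : G →* M, f.comp s = φ ∧ ∀ g, s g ∈ S := by
  choose s hsS hfs using hsurj
  refine ⟨⟨⟨s, hinj (hsS 1) S.one_mem (by simp [hfs])⟩, fun g h =>
    hinj (hsS _) (S.mul_mem (hsS g) (hsS h)) (by simp [hfs])⟩, MonoidHom.ext hfs, hsS⟩

theorem exists_PGLmap_section {R S : Type*} [CommRing R] [CommRing S] (f : R →+* S)
    (σ : GL (Fin 2) S →* GL (Fin 2) R)
    (hσ : (GeneralLinearGroup.map f).comp σ = MonoidHom.id _)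
    (hscalar : scalarSubgroup S ≤ (scalarSubgroup R).comap σ) :
    ∃ s : PGL2 S →* PGL2 R, (PGLmap f).comp s = MonoidHom.id _ := by
  refine ⟨QuotientGroup.map _ _ σ hscalar, ?_⟩
  refine MonoidHom.ext fun q => QuotientGroup.induction_on q fun g => ?_
  exact congrArg (Proj S) (DFunLike.congr_fun hσ g)

theorem scalarHom_neg_one (R : Type*) [CommRing R] : scalarHom R (-1) = -1 := by
  ext i j
  simp [scalarHom]

theorem scalarSubgroup_zmod_three_le_comap {R : Type*} [CommRing R]
    (σ : GL (Fin 2) (ZMod 3) →* GL (Fin 2) R) (hσ : σ (-1) = -1) :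
    scalarSubgroup (ZMod 3) ≤ (scalarSubgroup R).comap σ := by
  rintro _ ⟨u, rfl⟩
  obtain rfl | rfl : u = 1 ∨ u = -1 := by decide +revert
  · simp
  · exact ⟨-1, by rw [scalarHom_neg_one, scalarHom_neg_one, hσ]⟩

/-- Faster to evaluate in the kernel than the generic instance for functions on a `Fintype`. -/
instance Matrix.decEqFinTwo {α : Type*} [DecidableEq α] :
    DecidableEq (Matrix (Fin 2) (Fin 2) α) := fun M N =>
  decidable_of_iff (M 0 0 = N 0 0 ∧ M 0 1 = N 0 1 ∧ M 1 0 = N 1 0 ∧ M 1 1 = N 1 1) <| by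
    rw [← Matrix.ext_iff, Fin.forall_fin_two, Fin.forall_fin_two, Fin.forall_fin_two]
    tauto

def reduceMod3 : ℤ√(-2) →+* ZMod 3 := Zsqrtd.lift ⟨1, by decide⟩

/-- A copy of `GL₂(𝔽₃)` inside `GL₂(ℤ[√-2])`, one lift of each element. It realises the faithful
two-dimensional representation of `GL₂(𝔽₃)` whose character takes values in `ℚ(√-2)`: the lift
`!![0, 1; 1, √-2]` of the element `!![0, 1; 1, 1]` of order 8 has trace `√-2 = ζ₈ + ζ₈³`. -/
def gl2F3Lifts : List (Matrix (Fin 2) (Fin 2) (ℤ√(-2))) := [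
  !![⟨-1, 1⟩, ⟨-1, -1⟩; ⟨-2, 0⟩, ⟨1, -1⟩],
  !![⟨1, 0⟩, ⟨0, 1⟩; ⟨1, 0⟩, ⟨-1, 1⟩],
  !![⟨0, -1⟩, ⟨1, 0⟩; ⟨1, 0⟩, ⟨0, 0⟩],
  !![⟨-1, 1⟩, ⟨0, -1⟩; ⟨-2, 0⟩, ⟨1, -1⟩],
  !![⟨1, 0⟩, ⟨-1, 0⟩; ⟨1, 0⟩, ⟨0, 0⟩],
  !![⟨0, -1⟩, ⟨1, 1⟩; ⟨1, 0⟩, ⟨-1, 1⟩],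
  !![⟨1, -1⟩, ⟨0, 1⟩; ⟨2, 0⟩, ⟨-1, 1⟩],
  !![⟨0, 1⟩, ⟨-1, -1⟩; ⟨-1, 0⟩, ⟨1, -1⟩],
  !![⟨-1, 0⟩, ⟨1, 0⟩; ⟨-1, 0⟩, ⟨0, 0⟩],
  !![⟨1, -1⟩, ⟨1, 1⟩; ⟨2, 0⟩, ⟨-1, 1⟩],
  !![⟨0, 1⟩, ⟨-1, 0⟩; ⟨-1, 0⟩, ⟨0, 0⟩],
  !![⟨-1, 0⟩, ⟨0, -1⟩; ⟨-1, 0⟩, ⟨1, -1⟩],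
  !![⟨1, 0⟩, ⟨0, 0⟩; ⟨0, 0⟩, ⟨1, 0⟩],
  !![⟨-1, 0⟩, ⟨1, -1⟩; ⟨0, 0⟩, ⟨1, 0⟩],
  !![⟨-1, -1⟩, ⟨1, 0⟩; ⟨1, -1⟩, ⟨0, 1⟩],
  !![⟨1, 1⟩, ⟨-2, 0⟩; ⟨-1, 1⟩, ⟨-1, -1⟩],
  !![⟨0, 1⟩, ⟨-1, 0⟩; ⟨-1, 1⟩, ⟨-1, -1⟩],
  !![⟨0, -1⟩, ⟨1, 1⟩; ⟨1, -1⟩, ⟨0, 1⟩],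
  !![⟨-2, 0⟩, ⟨1, -1⟩; ⟨-1, -1⟩, ⟨1, 0⟩],
  !![⟨-1, 0⟩, ⟨0, 0⟩; ⟨-1, -1⟩, ⟨1, 0⟩],
  !![⟨0, 0⟩, ⟨1, 0⟩; ⟨1, 0⟩, ⟨0, 1⟩],
  !![⟨1, 1⟩, ⟨-2, 0⟩; ⟨0, 1⟩, ⟨-1, -1⟩],
  !![⟨1, -1⟩, ⟨1, 1⟩; ⟨1, 0⟩, ⟨0, 1⟩],
  !![⟨1, 0⟩, ⟨-1, 0⟩; ⟨0, 1⟩, ⟨-1, -1⟩],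
  !![⟨1, 0⟩, ⟨-1, 1⟩; ⟨1, 1⟩, ⟨-2, 0⟩],
  !![⟨2, 0⟩, ⟨-1, 1⟩; ⟨1, 1⟩, ⟨-2, 0⟩],
  !![⟨0, 0⟩, ⟨1, 0⟩; ⟨-1, 0⟩, ⟨1, 0⟩],
  !![⟨-1, -1⟩, ⟨1, 0⟩; ⟨0, -1⟩, ⟨1, 0⟩],
  !![⟨-1, 1⟩, ⟨0, -1⟩; ⟨-1, 0⟩, ⟨1, 0⟩],
  !![⟨-1, 0⟩, ⟨0, -1⟩; ⟨0, -1⟩, ⟨1, 0⟩],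
  !![⟨1, 0⟩, ⟨-1, 1⟩; ⟨0, 0⟩, ⟨-1, 0⟩],
  !![⟨-1, 0⟩, ⟨0, 0⟩; ⟨0, 0⟩, ⟨-1, 0⟩],
  !![⟨0, 1⟩, ⟨-1, -1⟩; ⟨-1, 1⟩, ⟨0, -1⟩],
  !![⟨0, -1⟩, ⟨1, 0⟩; ⟨1, -1⟩, ⟨1, 1⟩],
  !![⟨-1, -1⟩, ⟨2, 0⟩; ⟨1, -1⟩, ⟨1, 1⟩],
  !![⟨1, 1⟩, ⟨-1, 0⟩; ⟨-1, 1⟩, ⟨0, -1⟩],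
  !![⟨-2, 0⟩, ⟨1, -1⟩; ⟨-1, -1⟩, ⟨2, 0⟩],
  !![⟨-1, 0⟩, ⟨1, -1⟩; ⟨-1, -1⟩, ⟨2, 0⟩],
  !![⟨1, -1⟩, ⟨0, 1⟩; ⟨1, 0⟩, ⟨-1, 0⟩],
  !![⟨1, 0⟩, ⟨0, 1⟩; ⟨0, 1⟩, ⟨-1, 0⟩],
  !![⟨0, 0⟩, ⟨-1, 0⟩; ⟨1, 0⟩, ⟨-1, 0⟩],
  !![⟨1, 1⟩, ⟨-1, 0⟩; ⟨0, 1⟩, ⟨-1, 0⟩],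
  !![⟨1, 0⟩, ⟨0, 0⟩; ⟨1, 1⟩, ⟨-1, 0⟩],
  !![⟨2, 0⟩, ⟨-1, 1⟩; ⟨1, 1⟩, ⟨-1, 0⟩],
  !![⟨-1, 1⟩, ⟨-1, -1⟩; ⟨-1, 0⟩, ⟨0, -1⟩],
  !![⟨-1, 0⟩, ⟨1, 0⟩; ⟨0, -1⟩, ⟨1, 1⟩],
  !![⟨0, 0⟩, ⟨-1, 0⟩; ⟨-1, 0⟩, ⟨0, -1⟩],
  !![⟨-1, -1⟩, ⟨2, 0⟩; ⟨0, -1⟩, ⟨1, 1⟩]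
  ]

def gl2F3Lift : Submonoid (Matrix (Fin 2) (Fin 2) (ℤ√(-2))) where
  carrier := {M | M ∈ gl2F3Lifts}
  one_mem' := by decide +kernel
  mul_mem' := by
    have : ∀ M ∈ gl2F3Lifts, ∀ N ∈ gl2F3Lifts, M * N ∈ gl2F3Lifts := by decide +kernel
    exact fun {_ _} hM hN => this _ hM _ hN

theorem injOn_reduceMod3_gl2F3Lift :
    Set.InjOn (reduceMod3.mapMatrix : Matrix (Fin 2) (Fin 2) (ℤ√(-2)) →+* _) gl2F3Lift := by
  have : ∀ M ∈ gl2F3Lifts, ∀ N ∈ gl2F3Lifts, M.map reduceMod3 = N.map reduceMod3 → M = N := by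
    decide +kernel
  exact fun M hM N hN => this M hM N hN

theorem exists_mem_gl2F3Lift_map_eq (g : GL (Fin 2) (ZMod 3)) :
    ∃ M ∈ gl2F3Lift, M.map reduceMod3 = g := by
  have : ∀ m : Matrix (Fin 2) (Fin 2) (ZMod 3), m 0 0 * m 1 1 - m 0 1 * m 1 0 ≠ 0 →
      ∃ M ∈ gl2F3Lifts, M.map reduceMod3 = m := by
    decide +kernel
  refine this g ?_
  rw [← det_fin_two]
  exact (g.isUnit.map detMonoidHom).ne_zero

theorem neg_one_mem_gl2F3Lift : -1 ∈ gl2F3Lift := by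
  show _ ∈ gl2F3Lifts
  decide +kernel

theorem exists_GLmap_reduceMod3_section : ∃ σ : GL (Fin 2) (ZMod 3) →* GL (Fin 2) (ℤ√(-2)),
    (GeneralLinearGroup.map reduceMod3).comp σ = MonoidHom.id _ ∧ σ (-1) = -1 := by
  obtain ⟨s, hs, hsS⟩ := gl2F3Lift.exists_lift_of_injOn _ (Units.coeHom _)
    injOn_reduceMod3_gl2F3Lift exists_mem_gl2F3Lift_map_eq
  refine ⟨s.toHomUnits, ?_, ?_⟩
  · ext g : 1
    exact Units.ext congr($hs g)
  · refine Units.ext (injOn_reduceMod3_gl2F3Lift (hsS _) neg_one_mem_gl2F3Lift ?_)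
    simpa [Matrix.map_neg] using congr($hs (-1))

/-- Let `R = ℤ[√-2]` and let `π : R → 𝔽₃` be the ring homomorphism with `π(√-2) = 1`.
Then the induced homomorphism `PGL₂(R) → PGL₂(𝔽₃)` admits a section. -/
theorem pgl2_zsqrtd_section (π : ℤ√(-2) →+* ZMod 3) (hπ : π Zsqrtd.sqrtd = 1) :
    ∃ s : PGL2 (ZMod 3) →* PGL2 (ℤ√(-2)),
      (PGLmap π).comp s = MonoidHom.id (PGL2 (ZMod 3)) := by
  obtain rfl : π = reduceMod3 := Zsqrtd.hom_ext _ _ (by simpa [reduceMod3] using hπ)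
  obtain ⟨σ, hσ, hσ_neg⟩ := exists_GLmap_reduceMod3_section
  exact exists_PGLmap_section _ σ hσ (scalarSubgroup_zmod_three_le_comap σ hσ_neg)
end

section
/- Let k be a finite field of odd characteristic, and let H' be the subgroup of k× consisting of all elements of odd order (the prime-to-2 part of k×). Then the central subgroup Z' = {λ·I : λ ∈ H'} of GL_2(k) is a direct factor of GL_2(k): there exists a group homomorphism r : GL_2(k) → Z' with r(z) = z for every z ∈ Z', so that GL_2(k) is isomorphic to (ker r) × Z'. -/
open Matrix

/-!
Since `det (λ·I) = λ²` and squaring is a bijection on the odd-order part of the finite abelian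
group `kˣ`, a single exponent `e` makes `g ↦ (det g) ^ e · I` a homomorphism onto `Z'` that
fixes `Z'`: `x ↦ x ^ e` kills the `2`-part and inverts squaring on the odd part. As `Z'` is
central, such a retraction splits `GL₂(k)` as `ker r × Z'`.
-/

theorem Nat.exists_dvd_and_two_mul_modEq_one {a m : ℕ} (ham : a.Coprime m) (hm : Odd m) :
    ∃ e, a ∣ e ∧ 2 * e ≡ 1 [MOD m] := by
  have h2am : (2 * a).Coprime m := Nat.Coprime.mul_left (Nat.coprime_two_left.mpr hm) ham
  obtain ⟨t, -, ht⟩ := Nat.exists_mul_mod_eq_of_coprime 1 h2am hm.pos.ne'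
  exact ⟨a * t, dvd_mul_right a t, by rw [← mul_assoc]; exact ht⟩

theorem exists_pow_odd_orderOf_and_sq_pow_eq_self (G : Type*) [Group G] [Finite G] :
    ∃ e : ℕ, (∀ x : G, Odd (orderOf (x ^ e))) ∧ ∀ x : G, Odd (orderOf x) → (x ^ 2) ^ e = x := by
  set n := Nat.card G
  set m := ordCompl[2] n
  have hn : n ≠ 0 := Nat.card_pos.ne'
  have hm : Odd m := Nat.coprime_two_left.mp (Nat.coprime_ordCompl Nat.prime_two hn)
  have hcop : (2 ^ n.factorization 2).Coprime m :=
    Nat.Coprime.pow_left _ (Nat.coprime_ordCompl Nat.prime_two hn)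
  obtain ⟨e, hdvd, he⟩ := Nat.exists_dvd_and_two_mul_modEq_one hcop hm
  refine ⟨e, fun x => hm.of_dvd_nat (orderOf_dvd_of_pow_eq_one ?_), fun x hx => ?_⟩
  · have hnem : n ∣ e * m := Nat.ordProj_mul_ordCompl_eq_self n 2 ▸ mul_dvd_mul_right hdvd m
    rw [← pow_mul]
    exact orderOf_dvd_iff_pow_eq_one.mp ((orderOf_dvd_natCard x).trans hnem)
  · have hxm : orderOf x ∣ m :=
      Nat.dvd_ordCompl_of_dvd_not_dvd (orderOf_dvd_natCard x) hx.not_two_dvd_nat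
    rw [← pow_mul]
    nth_rewrite 2 [← pow_one x]
    exact pow_eq_pow_iff_modEq.mpr (he.of_dvd hxm)

theorem det_scalarHom {R : Type*} [CommRing R] (u : Rˣ) :
    GeneralLinearGroup.det (scalarHom R u) = u ^ 2 := by
  ext
  simp [scalarHom, sq]

theorem map_scalarHom_le_center {R : Type*} [CommRing R] (H : Subgroup Rˣ) :
    H.map (scalarHom R) ≤ Subgroup.center (GL (Fin 2) R) :=
  (Subgroup.map_le_range _ _).trans (scalarSubgroup_le_center R)

theorem nonempty_mulEquiv_ker_prod_of_retraction_of_le_center {G : Type*} [Group G]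
    {Z : Subgroup G} (hZ : Z ≤ Subgroup.center G) (r : G →* Z) (hr : ∀ z : Z, r z = z) :
    Nonempty (G ≃* (r.ker × Z)) := by
  let f : r.ker × Z →* G := r.ker.subtype.noncommCoprod Z.subtype
    fun a z => Subgroup.mem_center_iff.mp (hZ z.2) a
  have hf : ∀ p : r.ker × Z, r (f p) = p.2 := fun ⟨⟨a, ha⟩, z⟩ => by
    change r (a * z) = z
    rw [map_mul, MonoidHom.mem_ker.mp ha, one_mul, hr]
  have hinj : Function.Injective f := by
    refine (injective_iff_map_eq_one f).mpr fun ⟨a, z⟩ h => ?_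
    obtain rfl : z = 1 := by simpa [h] using (hf (a, z)).symm
    change (a : G) * 1 = 1 at h
    rw [mul_one, OneMemClass.coe_eq_one] at h
    rw [h, Prod.mk_one_one]
  have hsurj : Function.Surjective f := fun g =>
    ⟨(⟨g * (r g : G)⁻¹, by simp [hr]⟩, r g), inv_mul_cancel_right g (r g : G)⟩
  exact ⟨(MulEquiv.ofBijective f ⟨hinj, hsurj⟩).symm⟩

theorem odd_part_scalars_direct_factor_general (k : Type*) [Field k] [Finite k]
    (H' : Subgroup kˣ) (hH' : ∀ x : kˣ, x ∈ H' ↔ Odd (orderOf x)) :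
    ∃ r : GL (Fin 2) k →* (H'.map (scalarHom k)),
      (∀ z : H'.map (scalarHom k), r (z : GL (Fin 2) k) = z) ∧
      Nonempty (GL (Fin 2) k ≃* (r.ker × (H'.map (scalarHom k)))) := by
  obtain ⟨e, hodd, hsqrt⟩ := exists_pow_odd_orderOf_and_sq_pow_eq_self kˣ
  let r : GL (Fin 2) k →* H'.map (scalarHom k) :=
    ((scalarHom k).comp ((powMonoidHom e).comp GeneralLinearGroup.det)).codRestrict _
      fun g => ⟨_, (hH' _).mpr (hodd _), rfl⟩
  have hr : ∀ z : H'.map (scalarHom k), r z = z := by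
    rintro ⟨_, u, hu, rfl⟩
    ext1
    change scalarHom k (GeneralLinearGroup.det (scalarHom k u) ^ e) = scalarHom k u
    rw [det_scalarHom, hsqrt u ((hH' u).mp hu)]
  exact ⟨r, hr, nonempty_mulEquiv_ker_prod_of_retraction_of_le_center
    (map_scalarHom_le_center H') r hr⟩

/-- For a finite field `k` of odd characteristic, let `H'` be the subgroup of `kˣ` of
elements of odd order. Then the central subgroup `Z' = {λ·I : λ ∈ H'}` of `GL₂(k)` is a
direct factor: there is a retraction `r : GL₂(k) → Z'` restricting to the identity on
`Z'`, and `GL₂(k) ≅ (ker r) × Z'`. -/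
theorem odd_part_scalars_direct_factor (k : Type*) [Field k] [Finite k]
    (hchar : ringChar k ≠ 2)
    (H' : Subgroup kˣ) (hH' : ∀ x : kˣ, x ∈ H' ↔ Odd (orderOf x)) :
    ∃ r : GL (Fin 2) k →* (H'.map (scalarHom k)),
      (∀ z : H'.map (scalarHom k), r (z : GL (Fin 2) k) = z) ∧
      Nonempty (GL (Fin 2) k ≃* (r.ker × (H'.map (scalarHom k)))) :=
  odd_part_scalars_direct_factor_general k H' hH'
end
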